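/- Let λ ∈ (0,1) with ternary expansion λ = Σ_{i≥1} l_i 3^{-i}, l_i ∈ {0,1,2}, and for k ≥ 0 set λ_k = Σ_{i≥1} l_{i+k} 3^{-i} (so λ_0 = λ). Then for every k ≥ 0 and every x ∈ ℝ², F_4(F_3^k(x)) = (F_3∘F_{l_1}∘⋯∘F_{l_k})(x − (1/2, √3/2) + (λ_k, 0)); equivalently, the map (F_3∘F_{l_1}∘⋯∘F_{l_k})^{-1}∘F_4∘F_3^k is the translation x ↦ x − (1/2, √3/2) + (λ_k, 0). -/

import Mathlib

open Set

noncomputable section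

/-- The IFS of the `λ`-gasket with moving slider: `F_0(x) = x/3`,
`F_1(x) = x/3 + (1/3,0)`, `F_2(x) = x/3 + (2/3,0)`, `F_3(x) = x/3 + (1/3,√3/3)`,
`F_4(x) = x/3 + (1/6 + λ/3, √3/6)`. -/
def Kf (lam : ℝ) : Fin 5 → ℝ × ℝ → ℝ × ℝ := fun i x =>
  (1/3 : ℝ) • x +
    ![((0 : ℝ), (0 : ℝ)), (1/3, 0), (2/3, 0), (1/3, Real.sqrt 3 / 3),
      (1/6 + lam/3, Real.sqrt 3 / 6)] i

/-- `F_{l_1} ∘ ⋯ ∘ F_{l_k}` (applying `F_{l_k}` first), where `l i` is the digit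
`l_{i+1}`. -/
def Fcomp {α : Type*} {N : ℕ} (F : Fin N → α → α) (l : ℕ → Fin N) : ℕ → α → α
  | 0 => id
  | k + 1 => Fcomp F l k ∘ F (l k)

/-!
`F_4 = F_3 ∘ τ_λ` for the translation `τ_t x = x - (1/2, √3/2) + (t, 0)`, and
`τ_{(l + t)/3} ∘ F_3 = F_l ∘ τ_t` for every digit `l ∈ {0,1,2}`. Since the shifted
expansions satisfy `λ_k = (l_{k+1} + λ_{k+1})/3`, the second identity pushes the
translation through one more `F_3` at each step of an induction on `k`.
-/

def slide (t : ℝ) (x : ℝ × ℝ) : ℝ × ℝ := x - (1/2, Real.sqrt 3 / 2) + (t, 0)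

/-- The paper's `λ_k`; `dgt i` is the digit `l_{i+1}`. -/
def ternaryTail {N : ℕ} (dgt : ℕ → Fin N) (k : ℕ) : ℝ :=
  ∑' i : ℕ, ((dgt (i + k) : ℕ) : ℝ) / 3 ^ (i + 1)

lemma summable_fin_digits_div_three_pow {N : ℕ} (d : ℕ → Fin N) :
    Summable fun i : ℕ => ((d i : ℕ) : ℝ) / 3 ^ (i + 1) := by
  have hgeom : Summable fun i : ℕ => (N : ℝ) / 3 * (1 / 3) ^ i :=
    (summable_geometric_of_lt_one (by norm_num) (by norm_num)).mul_left _
  refine hgeom.of_nonneg_of_le (fun i => by positivity) (fun i => ?_)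
  have hd : ((d i : ℕ) : ℝ) ≤ N := by exact_mod_cast (d i).isLt.le
  calc ((d i : ℕ) : ℝ) / 3 ^ (i + 1) ≤ N / 3 ^ (i + 1) := by gcongr
    _ = (N : ℝ) / 3 * (1 / 3) ^ i := by rw [pow_succ, one_div_pow]; field_simp

lemma ternaryTail_eq {N : ℕ} (dgt : ℕ → Fin N) (k : ℕ) :
    ternaryTail dgt k = ((dgt k : ℕ) : ℝ) / 3 + ternaryTail dgt (k + 1) / 3 := by
  rw [ternaryTail, (summable_fin_digits_div_three_pow fun i => dgt (i + k)).tsum_eq_zero_add,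
    ternaryTail, ← tsum_div_const]
  congr 1
  · simp
  · refine tsum_congr fun i => ?_
    rw [show i + 1 + k = i + (k + 1) by omega, pow_succ _ (i + 1), div_div]

lemma Kf_four_eq (lam : ℝ) (x : ℝ × ℝ) : Kf lam 4 x = Kf lam 3 (slide lam x) := by
  ext <;> simp [Kf, slide] <;> ring

lemma Kf_of_le_two (lam : ℝ) {d : Fin 5} (hd : (d : ℕ) ≤ 2) (x : ℝ × ℝ) :
    Kf lam d x = (1 / 3 : ℝ) • x + (((d : ℕ) : ℝ) / 3, 0) := by
  fin_cases d <;> simp_all [Kf]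

lemma slide_Kf_three (lam : ℝ) {d : Fin 5} (hd : (d : ℕ) ≤ 2) (t : ℝ) (x : ℝ × ℝ) :
    slide (((d : ℕ) : ℝ) / 3 + t / 3) (Kf lam 3 x) = Kf lam d (slide t x) := by
  rw [Kf_of_le_two lam hd]
  ext <;> simp [Kf, slide] <;> ring

theorem stmt19_general (lam : ℝ)
    (dgt : ℕ → Fin 5) (hdgt : ∀ i, (dgt i : ℕ) ≤ 2)
    (hlam : lam = ∑' i : ℕ, ((dgt i : ℕ) : ℝ) / 3 ^ (i + 1)) :
    ∀ (k : ℕ) (x : ℝ × ℝ),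
      Kf lam 4 ((Kf lam 3)^[k] x)
        = Kf lam 3 (Fcomp (Kf lam) dgt k
            (x - (1/2, Real.sqrt 3 / 2)
               + ((∑' i : ℕ, ((dgt (i + k) : ℕ) : ℝ) / 3 ^ (i + 1)), 0))) := by
  change ∀ k x, Kf lam 4 ((Kf lam 3)^[k] x)
    = Kf lam 3 (Fcomp (Kf lam) dgt k (slide (ternaryTail dgt k) x))
  intro k
  induction k with
  | zero =>
    intro x
    rw [Function.iterate_zero_apply, Kf_four_eq, hlam]
    rfl
  | succ k ih =>
    intro x
    rw [Function.iterate_succ_apply, ih, ternaryTail_eq, slide_Kf_three lam (hdgt k)]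
    rfl

/-- **Appendix, Example 2 (computation).** Let `λ ∈ (0,1)` have ternary expansion
`λ = Σ_{i≥1} l_i 3^{-i}` with digits `l_i ∈ {0,1,2}` (here `dgt i = l_{i+1}`), and set
`λ_k = Σ_{i≥1} l_{i+k} 3^{-i}`. Then for every `k ≥ 0` and every `x ∈ ℝ²`,
`F_4(F_3^k(x)) = (F_3 ∘ F_{l_1} ∘ ⋯ ∘ F_{l_k})(x − (1/2, √3/2) + (λ_k, 0))`;
equivalently, `(F_3∘F_{l_1}∘⋯∘F_{l_k})^{-1}∘F_4∘F_3^k` is the translation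
`x ↦ x − (1/2, √3/2) + (λ_k, 0)`. -/
theorem stmt19 (lam : ℝ) (h0 : 0 < lam) (h1 : lam < 1)
    (dgt : ℕ → Fin 5) (hdgt : ∀ i, (dgt i : ℕ) ≤ 2)
    (hlam : lam = ∑' i : ℕ, ((dgt i : ℕ) : ℝ) / 3 ^ (i + 1)) :
    ∀ (k : ℕ) (x : ℝ × ℝ),
      Kf lam 4 ((Kf lam 3)^[k] x)
        = Kf lam 3 (Fcomp (Kf lam) dgt k
            (x - (1/2, Real.sqrt 3 / 2)
               + ((∑' i : ℕ, ((dgt (i + k) : ℕ) : ℝ) / 3 ^ (i + 1)), 0))) :=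
  stmt19_general lam dgt hdgt hlam
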